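/- Let I be a finite index set, z ∈ R^I, and let θ = HT_s(z) be the projection of z onto the set of s-sparse vectors. Then for any s*-sparse vector θ̂ ∈ R^I with s* ≤ s ≤ |I|, one has ‖θ − z‖² ≤ ((|I| − s)/(|I| − s*)) · ‖θ̂ − z‖². -/

import Mathlib

open Finset
open scoped RealInnerProductSpace

noncomputable def htSet {d : ℕ} (k : ℕ) (x : EuclideanSpace ℝ (Fin d)) : Finset (Fin d) :=
  (Finset.exists_max_image ((Finset.univ : Finset (Fin d)).powersetCard (min k d))
    (fun S => ∑ i ∈ S, (x i) ^ 2)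
    ((Finset.powersetCard_nonempty).2 (by simp))).choose

/-- Hard thresholding: keep the `k` entries of largest magnitude, zero the rest. -/
noncomputable def HT {d : ℕ} (k : ℕ) (x : EuclideanSpace ℝ (Fin d)) : EuclideanSpace ℝ (Fin d) :=
  WithLp.toLp 2 (fun i => if i ∈ htSet k x then x i else 0)

/-- Support of a vector. -/
noncomputable def supp {d : ℕ} (x : EuclideanSpace ℝ (Fin d)) : Finset (Fin d) :=
  Finset.univ.filter (fun i => x i ≠ 0)

/-- Restriction of a vector to an index set. -/
noncomputable def restr {d : ℕ} (S : Finset (Fin d)) (x : EuclideanSpace ℝ (Fin d)) :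
    EuclideanSpace ℝ (Fin d) :=
  WithLp.toLp 2 (fun i => if i ∈ S then x i else 0)

/-- ℓ1 norm. -/
noncomputable def l1norm {d : ℕ} (x : EuclideanSpace ℝ (Fin d)) : ℝ := ∑ i, |x i|

/-- ℓ∞ norm. -/
noncomputable def linf {d : ℕ} (x : EuclideanSpace ℝ (Fin d)) : ℝ := ⨆ i, |x i|

/-!
If `T = htSet s z`, the error `‖HT s z - z‖²` is the sum of `z i ²` over the `d - s` indices
outside `T`, which carry the smallest values of `z i ²`. The mean of the smallest `m` values of a
function is at most its mean over any set of at least `m` indices; applied to the complement of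
the support of `θhat`, which has at least `d - sstar` elements and on which `θhat - z = -z`, this
gives `‖HT s z - z‖² / (d - s) ≤ ‖θhat - z‖² / (d - sstar)`.
-/

section Averages

variable {ι : Type*} [DecidableEq ι]

theorem card_mul_sum_le_card_mul_sum_of_le_threshold (f : ι → ℝ) {A U : Finset ι} (t : ℝ)
    (hA : ∀ i ∈ A, f i ≤ t) (hAc : ∀ j ∉ A, t ≤ f j) (hAU : #A ≤ #U) :
    (#U : ℝ) * ∑ i ∈ A, f i ≤ #A * ∑ j ∈ U, f j := by
  have hsumA := sum_inter_add_sum_sdiff A U f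
  have hsumU := sum_inter_add_sum_sdiff U A f
  have hcardA : (#(A ∩ U) : ℝ) + #(A \ U) = #A := by exact_mod_cast card_inter_add_card_sdiff A U
  have hcardU : (#(A ∩ U) : ℝ) + #(U \ A) = #U := by
    rw [inter_comm]; exact_mod_cast card_inter_add_card_sdiff U A
  rw [inter_comm] at hsumU
  have hX : ∑ i ∈ A ∩ U, f i ≤ #(A ∩ U) * t := by
    rw [← nsmul_eq_mul]; exact sum_le_card_nsmul _ _ _ fun i hi => hA i (mem_inter.1 hi).1
  have hY : ∑ i ∈ A \ U, f i ≤ #(A \ U) * t := by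
    rw [← nsmul_eq_mul]; exact sum_le_card_nsmul _ _ _ fun i hi => hA i (mem_sdiff.1 hi).1
  have hZ : #(U \ A) * t ≤ ∑ j ∈ U \ A, f j := by
    rw [← nsmul_eq_mul]; exact card_nsmul_le_sum _ _ _ fun j hj => hAc j (mem_sdiff.1 hj).2
  have hqr : (#(A \ U) : ℝ) ≤ #(U \ A) := by linarith [(Nat.cast_le (α := ℝ)).2 hAU]
  rw [← hsumA, ← hsumU, ← hcardA, ← hcardU]
  -- With `p, q, r` the cards of `A ∩ U, A \ U, U \ A` and `X, Y, Z` the sums over them, the goal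
  -- is `(r - q) X + (p + r) Y ≤ (p + q) Z`, and `(r - q) p t + (p + r) q t = (p + q) r t`.
  nlinarith [mul_le_mul_of_nonneg_left hY (by positivity : (0 : ℝ) ≤ #(A ∩ U) + #(U \ A)),
    mul_le_mul_of_nonneg_left hZ (by positivity : (0 : ℝ) ≤ #(A ∩ U) + #(A \ U)),
    mul_le_mul_of_nonneg_left hX (sub_nonneg.2 hqr)]

theorem card_mul_sum_le_card_mul_sum_of_forall_le (f : ι → ℝ) {A U : Finset ι}
    (hA : ∀ i ∈ A, ∀ j ∉ A, f i ≤ f j) (hAU : #A ≤ #U) :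
    (#U : ℝ) * ∑ i ∈ A, f i ≤ #A * ∑ j ∈ U, f j := by
  rcases A.eq_empty_or_nonempty with rfl | hne
  · simp
  obtain ⟨i₀, hi₀, hmax⟩ := A.exists_max_image f hne
  exact card_mul_sum_le_card_mul_sum_of_le_threshold f (f i₀) hmax (hA i₀ hi₀) hAU

theorem le_of_sum_le_sum_of_card_eq {f : ι → ℝ} {T : Finset ι}
    (hT : ∀ S : Finset ι, #S = #T → ∑ i ∈ S, f i ≤ ∑ i ∈ T, f i) {i j : ι}
    (hi : i ∈ T) (hj : j ∉ T) : f j ≤ f i := by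
  have hj' : j ∉ T.erase i := fun h => hj (mem_of_mem_erase h)
  have hcard : #(insert j (T.erase i)) = #T := by
    rw [card_insert_of_notMem hj', card_erase_add_one hi]
  have := hT _ hcard
  rw [sum_insert hj', sum_erase_eq_sub hi] at this
  linarith

end Averages

section Thresholding

variable {d : ℕ}

theorem norm_sq_eq_sum_sq (x : EuclideanSpace ℝ (Fin d)) : ‖x‖ ^ 2 = ∑ i, x i ^ 2 := by
  simp [EuclideanSpace.norm_sq_eq, sq_abs]

theorem htSet_spec (k : ℕ) (x : EuclideanSpace ℝ (Fin d)) :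
    htSet k x ∈ powersetCard (min k d) univ ∧
      ∀ S ∈ powersetCard (min k d) univ, ∑ i ∈ S, x i ^ 2 ≤ ∑ i ∈ htSet k x, x i ^ 2 :=
  (exists_max_image (univ.powersetCard (min k d)) (fun S => ∑ i ∈ S, x i ^ 2)
    (powersetCard_nonempty.2 (by simp))).choose_spec

theorem card_htSet (k : ℕ) (x : EuclideanSpace ℝ (Fin d)) : #(htSet k x) = min k d :=
  mem_powersetCard_univ.1 (htSet_spec k x).1

theorem sum_sq_le_sum_sq_htSet (k : ℕ) (x : EuclideanSpace ℝ (Fin d)) (S : Finset (Fin d))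
    (hS : #S = #(htSet k x)) : ∑ i ∈ S, x i ^ 2 ≤ ∑ i ∈ htSet k x, x i ^ 2 :=
  (htSet_spec k x).2 S
    (mem_powersetCard_univ.2 (hS.trans (card_htSet k x)))

theorem norm_restr_sub_sq (S : Finset (Fin d)) (x : EuclideanSpace ℝ (Fin d)) :
    ‖restr S x - x‖ ^ 2 = ∑ i ∈ Sᶜ, x i ^ 2 := by
  rw [norm_sq_eq_sum_sq, ← sum_add_sum_compl S]
  have hS : ∀ i ∈ S, (restr S x - x) i ^ 2 = 0 := fun i hi => by simp [restr, hi]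
  have hSc : ∀ i ∈ Sᶜ, (restr S x - x) i ^ 2 = x i ^ 2 := fun i hi => by
    simp [restr, mem_compl.1 hi]
  rw [sum_congr rfl hS, sum_congr rfl hSc, sum_const_zero, zero_add]

theorem sum_compl_supp_sq_le_norm_sub_sq (θ z : EuclideanSpace ℝ (Fin d)) :
    ∑ i ∈ (supp θ)ᶜ, z i ^ 2 ≤ ‖θ - z‖ ^ 2 := by
  rw [norm_sq_eq_sum_sq]
  calc ∑ i ∈ (supp θ)ᶜ, z i ^ 2 = ∑ i ∈ (supp θ)ᶜ, (θ - z) i ^ 2 :=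
        sum_congr rfl fun i hi => by simp_all [supp]
    _ ≤ ∑ i, (θ - z) i ^ 2 :=
        sum_le_sum_of_subset_of_nonneg (subset_univ _) fun i _ _ => sq_nonneg _

theorem HT_of_le {k : ℕ} (hk : d ≤ k) (x : EuclideanSpace ℝ (Fin d)) : HT k x = x := by
  have huniv : htSet k x = univ := eq_univ_of_card _ (by simp [card_htSet, hk])
  ext i
  simp [HT, huniv]

theorem card_mul_norm_HT_sub_sq_le {k : ℕ} (hk : k ≤ d) (x : EuclideanSpace ℝ (Fin d))
    {U : Finset (Fin d)} (hU : d - k ≤ #U) :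
    (#U : ℝ) * ‖HT k x - x‖ ^ 2 ≤ (d - k) * ∑ j ∈ U, x j ^ 2 := by
  have hcard : #(htSet k x)ᶜ = d - k := by simp [card_compl, card_htSet, hk]
  have hsmall : ∀ i ∈ (htSet k x)ᶜ, ∀ j ∉ (htSet k x)ᶜ, x i ^ 2 ≤ x j ^ 2 := fun i hi j hj =>
    le_of_sum_le_sum_of_card_eq (sum_sq_le_sum_sq_htSet k x) (by simpa using hj) (mem_compl.1 hi)
  have hmean := card_mul_sum_le_card_mul_sum_of_forall_le (fun i => x i ^ 2) hsmall (hcard ▸ hU)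
  rw [hcard, Nat.cast_sub hk, ← norm_restr_sub_sq] at hmean
  exact hmean

end Thresholding

theorem stmt1 (d s sstar : ℕ) (h1 : sstar ≤ s) (h2 : s ≤ d)
    (z θhat : EuclideanSpace ℝ (Fin d)) (hsp : (supp θhat).card ≤ sstar) :
    ‖HT s z - z‖ ^ 2 ≤ (((d : ℝ) - s) / ((d : ℝ) - sstar)) * ‖θhat - z‖ ^ 2 := by
  rcases (h1.trans h2).eq_or_lt with hd | hd
  · -- Then `s = d`, `HT s z = z`, and the right side is the junk value `0 / 0 * _ = 0`.
    have hs : s = d := le_antisymm h2 (hd ▸ h1)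
    simp [hs, HT_of_le]
  have hU : d - sstar ≤ #(supp θhat)ᶜ := by rw [card_compl, Fintype.card_fin]; omega
  have hmean := card_mul_norm_HT_sub_sq_le h2 z (hU.trans' (by omega))
  have hU' : (d : ℝ) - sstar ≤ #(supp θhat)ᶜ := by
    rw [← Nat.cast_sub (h1.trans h2)]; exact_mod_cast hU
  rw [div_mul_eq_mul_div, le_div_iff₀ (sub_pos.2 (by exact_mod_cast hd))]
  calc ‖HT s z - z‖ ^ 2 * (d - sstar) ≤ #(supp θhat)ᶜ * ‖HT s z - z‖ ^ 2 := by
        rw [mul_comm]; exact mul_le_mul_of_nonneg_right hU' (sq_nonneg _)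
    _ ≤ (d - s) * ∑ j ∈ (supp θhat)ᶜ, z j ^ 2 := hmean
    _ ≤ (d - s) * ‖θhat - z‖ ^ 2 :=
        mul_le_mul_of_nonneg_left (sum_compl_supp_sq_le_norm_sub_sq θhat z)
          (sub_nonneg.2 (by exact_mod_cast h2))
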